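/- arXiv:2002.04178 — 4 statements merged into one kernel-verified Lean document; each statement's English description precedes it below -/
import Mathlib

section
/- Assume u, v : Ω → ℝ are g-convex and differentiable. Suppose x, ξ ∈ Ω satisfy u(x) > v(x) and Y_u(x) = Y_v(ξ). Then Z_u(x) < Z_v(ξ), and consequently u(z) > g(z, Y_v(ξ), Z_v(ξ)) for every z ∈ Ω; in particular u(ξ) > v(ξ). -/
open Set MeasureTheory Metric NNReal

noncomputable section

/-- `ℝⁿ` as Euclidean space. -/
abbrev Euc (n : ℕ) := EuclideanSpace ℝ (Fin n)

variable {n : ℕ}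

/-- The partial gradient `g_x` of a generating function. -/
def gradX (g : Euc n → Euc n → ℝ → ℝ) (x y : Euc n) (z : ℝ) : Euc n :=
  gradient (fun x' => g x' y z) x

/-- The partial gradient `g_y` of a generating function. -/
def gradY (g : Euc n → Euc n → ℝ → ℝ) (x y : Euc n) (z : ℝ) : Euc n :=
  gradient (fun y' => g x y' z) y

/-- The partial derivative `g_z` of a generating function. -/
def gradZ (g : Euc n → Euc n → ℝ → ℝ) (x y : Euc n) (z : ℝ) : ℝ :=
  deriv (fun z' => g x y z') z

/-- The matrix of mixed derivatives `g_{x_i y_j}`. -/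
def matGXY (g : Euc n → Euc n → ℝ → ℝ) (x y : Euc n) (z : ℝ) : Matrix (Fin n) (Fin n) ℝ :=
  fun i j => gradient (fun y' => gradX g x y' z i) y j

/-- The vector of mixed derivatives `g_{x_i z}`. -/
def vecGXZ (g : Euc n → Euc n → ℝ → ℝ) (x y : Euc n) (z : ℝ) : Fin n → ℝ :=
  fun i => deriv (fun z' => gradX g x y z' i) z

/-- The matrix of second derivatives `g_{x_i x_j}`. -/
def matGXX (g : Euc n → Euc n → ℝ → ℝ) (x y : Euc n) (z : ℝ) : Matrix (Fin n) (Fin n) ℝ :=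
  fun i j => gradient (fun x' => gradX g x' y z i) x j

/-- The matrix `E = g_{xy} - (g_z)⁻¹ g_{xz} ⊗ g_y` from condition A2. -/
def matE (g : Euc n → Euc n → ℝ → ℝ) (x y : Euc n) (z : ℝ) : Matrix (Fin n) (Fin n) ℝ :=
  fun i j => matGXY g x y z i j - (gradZ g x y z)⁻¹ * vecGXZ g x y z i * gradY g x y z j

/-- The set `𝒰 = {(x, g(x,y,z), g_x(x,y,z)) : (x,y,z) ∈ Γ}`. -/
def USet (g : Euc n → Euc n → ℝ → ℝ) (Γ : Set (Euc n × Euc n × ℝ)) :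
    Set (Euc n × ℝ × Euc n) :=
  {w | ∃ x y z, (x, y, z) ∈ Γ ∧ w = (x, g x y z, gradX g x y z)}

/-- Condition A1: for each `(x,u,p) ∈ 𝒰` there is a unique `(y,z)` with `(x,y,z) ∈ Γ`,
`g(x,y,z) = u` and `g_x(x,y,z) = p`. -/
def CondA1 (g : Euc n → Euc n → ℝ → ℝ) (Γ : Set (Euc n × Euc n × ℝ)) : Prop :=
  ∀ x u p, (x, u, p) ∈ USet g Γ →
    ∃! yz : Euc n × ℝ, (x, yz.1, yz.2) ∈ Γ ∧ g x yz.1 yz.2 = u ∧ gradX g x yz.1 yz.2 = p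

/-- Condition A1*: for fixed `(y,z)` the map `x ↦ -g_y/g_z (x,y,z)` is injective. -/
def CondA1Star (g : Euc n → Euc n → ℝ → ℝ) (Γ : Set (Euc n × Euc n × ℝ)) : Prop :=
  ∀ y z, Set.InjOn (fun x => (-(gradZ g x y z))⁻¹ • gradY g x y z) {x | (x, y, z) ∈ Γ}

/-- Condition A2: `g_z < 0` and `det E ≠ 0` on `Γ`. -/
def CondA2 (g : Euc n → Euc n → ℝ → ℝ) (Γ : Set (Euc n × Euc n × ℝ)) : Prop :=
  ∀ x y z, (x, y, z) ∈ Γ → gradZ g x y z < 0 ∧ (matE g x y z).det ≠ 0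

/-- `Γ` is a domain whose sections `I(x,y) = {z : (x,y,z) ∈ Γ}` are open intervals. -/
def GammaDomain (Γ : Set (Euc n × Euc n × ℝ)) : Prop :=
  IsOpen Γ ∧ ∀ x y : Euc n, OrdConnected {z : ℝ | (x, y, z) ∈ Γ}

/-- `g(·,y₀,z₀)` is a `g`-support of `u` at `x₀` (relative to `Ω`). -/
def IsGSupport (g : Euc n → Euc n → ℝ → ℝ) (Γ : Set (Euc n × Euc n × ℝ)) (Ω : Set (Euc n))
    (u : Euc n → ℝ) (x₀ y₀ : Euc n) (z₀ : ℝ) : Prop :=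
  (x₀, y₀, z₀) ∈ Γ ∧ u x₀ = g x₀ y₀ z₀ ∧ ∀ x ∈ Ω, (x, y₀, z₀) ∈ Γ ∧ g x y₀ z₀ ≤ u x

/-- `u` is `g`-convex on `Ω`. -/
def GConvexOn (g : Euc n → Euc n → ℝ → ℝ) (Γ : Set (Euc n × Euc n × ℝ)) (Ω : Set (Euc n))
    (u : Euc n → ℝ) : Prop :=
  ∀ x₀ ∈ Ω, ∃ y₀ z₀, IsGSupport g Γ Ω u x₀ y₀ z₀

/-- The maps `Y`, `Z` solve `g(x,Y(x,u,p),Z(x,u,p)) = u`, `g_x(x,Y(x,u,p),Z(x,u,p)) = p`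
on `𝒰`, with values in `Γ`. -/
def YZCompat (g : Euc n → Euc n → ℝ → ℝ) (Γ : Set (Euc n × Euc n × ℝ))
    (Y : Euc n → ℝ → Euc n → Euc n) (Z : Euc n → ℝ → Euc n → ℝ) : Prop :=
  ∀ x u p, (x, u, p) ∈ USet g Γ →
    (x, Y x u p, Z x u p) ∈ Γ ∧ g x (Y x u p) (Z x u p) = u ∧
      gradX g x (Y x u p) (Z x u p) = p

/-- `Y_u(x) = Y(x, u(x), Du(x))`. -/
def YMap (Y : Euc n → ℝ → Euc n → Euc n) (u : Euc n → ℝ) (x : Euc n) : Euc n :=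
  Y x (u x) (gradient u x)

/-- `Z_u(x) = Z(x, u(x), Du(x))`. -/
def ZMap (Z : Euc n → ℝ → Euc n → ℝ) (u : Euc n → ℝ) (x : Euc n) : ℝ :=
  Z x (u x) (gradient u x)

/-- The one-jet of `u` lies in `𝒰` on `Ω`. -/
def JetInU (g : Euc n → Euc n → ℝ → ℝ) (Γ : Set (Euc n × Euc n × ℝ)) (Ω : Set (Euc n))
    (u : Euc n → ℝ) : Prop :=
  ∀ x ∈ Ω, (x, u x, gradient u x) ∈ USet g Γ

/-- `u ∈ C^{1,1}(Ω)`: continuously differentiable with locally Lipschitz gradient. -/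
def C11On (Ω : Set (Euc n)) (u : Euc n → ℝ) : Prop :=
  (∀ x ∈ Ω, DifferentiableAt ℝ u x) ∧ ContinuousOn (fun x => gradient u x) Ω ∧
    ∀ x ∈ Ω, ∃ ε > 0, ∃ K : ℝ≥0, LipschitzOnWith K (fun y => gradient u y) (ball x ε ∩ Ω)

/-- `u` is a generalized solution of the generated Jacobian equation:
`∫_{Y_u(E)} f* = ∫_E f` for every measurable `E ⊆ Ω`. -/
def IsGenSol (Y : Euc n → ℝ → Euc n → Euc n) (Ω : Set (Euc n)) (f fstar : Euc n → ℝ)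
    (u : Euc n → ℝ) : Prop :=
  ∀ s ⊆ Ω, MeasurableSet s → ∫ y in YMap Y u '' s, fstar y = ∫ x in s, f x

/-- The second derivative (Hessian) matrix of `u` at `x`. -/
def Hess (u : Euc n → ℝ) (x : Euc n) : Matrix (Fin n) (Fin n) ℝ :=
  fun i j => (fderiv ℝ (fun y => gradient u y) x) (EuclideanSpace.single j 1) i

end

/-!
At a point of differentiability the `g`-support of a differentiable `g`-convex function is the
one with parameters `(Y_u, Z_u)`. So the `u`-support at `x` and the `v`-support at `ξ` share
`y = Y_u(x) = Y_v(ξ)`. At `x` the `v`-support lies below `v(x) < u(x)`, which the `u`-support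
attains; as `g` is strictly decreasing in `z` (A2), this forces `Z_u(x) < Z_v(ξ)`, so everywhere
the `v`-support lies strictly below the `u`-support and hence below `u`.
-/

section

variable {n : ℕ} {Ω : Set (Euc n)} {Γ : Set (Euc n × Euc n × ℝ)} {g : Euc n → Euc n → ℝ → ℝ}

theorem differentiableAt_partial_x (hΓ : IsOpen Γ)
    (hg : DifferentiableOn ℝ (fun w : Euc n × Euc n × ℝ => g w.1 w.2.1 w.2.2) Γ)
    {x y : Euc n} {z : ℝ} (hm : (x, y, z) ∈ Γ) :
    DifferentiableAt ℝ (fun x' => g x' y z) x :=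
  (hg.differentiableAt (hΓ.mem_nhds hm)).comp (f := fun x' : Euc n => (x', y, z)) x
    (by fun_prop)

theorem differentiableAt_partial_z (hΓ : IsOpen Γ)
    (hg : DifferentiableOn ℝ (fun w : Euc n × Euc n × ℝ => g w.1 w.2.1 w.2.2) Γ)
    {x y : Euc n} {z : ℝ} (hm : (x, y, z) ∈ Γ) :
    DifferentiableAt ℝ (fun z' => g x y z') z :=
  (hg.differentiableAt (hΓ.mem_nhds hm)).comp (f := fun z' : ℝ => (x, y, z')) z
    (by fun_prop)

theorem strictAntiOn_section_of_gradZ_neg (hΓ : GammaDomain Γ)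
    (hg : DifferentiableOn ℝ (fun w : Euc n × Euc n × ℝ => g w.1 w.2.1 w.2.2) Γ)
    (hgz : ∀ x y z, (x, y, z) ∈ Γ → gradZ g x y z < 0) (x y : Euc n) :
    StrictAntiOn (g x y) {z | (x, y, z) ∈ Γ} := by
  have hopen : IsOpen {z : ℝ | (x, y, z) ∈ Γ} := hΓ.1.preimage (by fun_prop)
  refine strictAntiOn_of_deriv_neg (convex_iff_ordConnected.2 (hΓ.2 x y))
    (fun z hz => (differentiableAt_partial_z hΓ.1 hg hz).continuousAt.continuousWithinAt)
    (fun z hz => ?_)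
  rw [hopen.interior_eq] at hz
  exact hgz x y z hz

variable {u : Euc n → ℝ} {x₀ y₀ : Euc n} {z₀ : ℝ}

theorem IsGSupport.gradient_eq_gradX (hs : IsGSupport g Γ Ω u x₀ y₀ z₀) (hΩ : IsOpen Ω)
    (hx₀ : x₀ ∈ Ω) (hu : DifferentiableAt ℝ u x₀)
    (hg : DifferentiableAt ℝ (fun x' => g x' y₀ z₀) x₀) :
    gradient u x₀ = gradX g x₀ y₀ z₀ := by
  have hmin : IsLocalMin (fun x' => u x' - g x' y₀ z₀) x₀ := by
    filter_upwards [hΩ.mem_nhds hx₀] with x' hx'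
    simp only [hs.2.1, sub_self, sub_nonneg]
    exact (hs.2.2 x' hx').2
  have hderiv := hmin.hasFDerivAt_eq_zero (hu.hasFDerivAt.sub hg.hasFDerivAt)
  rw [sub_eq_zero] at hderiv
  simp only [gradient, gradX, hderiv]

/-- A support touches `u` to first order, so A1 pins its parameters to `(Y_u(x₀), Z_u(x₀))`. -/
theorem GConvexOn.isGSupport_YMap_ZMap {Y : Euc n → ℝ → Euc n → Euc n}
    {Z : Euc n → ℝ → Euc n → ℝ} (hu : GConvexOn g Γ Ω u) (hΩ : IsOpen Ω) (hΓ : IsOpen Γ)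
    (hg : DifferentiableOn ℝ (fun w : Euc n × Euc n × ℝ => g w.1 w.2.1 w.2.2) Γ)
    (hA1 : CondA1 g Γ) (hYZ : YZCompat g Γ Y Z) (hjet : JetInU g Γ Ω u) (hx₀ : x₀ ∈ Ω)
    (hdiff : DifferentiableAt ℝ u x₀) :
    IsGSupport g Γ Ω u x₀ (YMap Y u x₀) (ZMap Z u x₀) := by
  obtain ⟨y₀, z₀, hs⟩ := hu x₀ hx₀
  have hgrad := hs.gradient_eq_gradX hΩ hx₀ hdiff (differentiableAt_partial_x hΓ hg hs.1)
  obtain ⟨hmem, hval, hslope⟩ := hYZ x₀ (u x₀) (gradient u x₀) (hjet x₀ hx₀)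
  have hyz : ((y₀, z₀) : Euc n × ℝ) = (YMap Y u x₀, ZMap Z u x₀) :=
    (hA1 x₀ (u x₀) (gradient u x₀) (hjet x₀ hx₀)).unique ⟨hs.1, hs.2.1.symm, hgrad.symm⟩
      ⟨hmem, hval, hslope⟩
  obtain ⟨rfl, rfl⟩ := Prod.mk.inj hyz
  exact hs

end

theorem height_comparison_at_common_target_general
    {n : ℕ} {Ω : Set (Euc n)} {Γ : Set (Euc n × Euc n × ℝ)}
    {g : Euc n → Euc n → ℝ → ℝ} {Y : Euc n → ℝ → Euc n → Euc n} {Z : Euc n → ℝ → Euc n → ℝ}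
    {u v : Euc n → ℝ} {x ξ : Euc n}
    (hΩ : IsOpen Ω)
    (hΓ : GammaDomain Γ)
    (hg : ContDiffOn ℝ 4 (fun w : Euc n × Euc n × ℝ => g w.1 w.2.1 w.2.2) Γ)
    (hA1 : CondA1 g Γ) (hA2 : CondA2 g Γ)
    (hYZ : YZCompat g Γ Y Z)
    (hudiff : ∀ x' ∈ Ω, DifferentiableAt ℝ u x') (hvdiff : ∀ x' ∈ Ω, DifferentiableAt ℝ v x')
    (hugc : GConvexOn g Γ Ω u) (hvgc : GConvexOn g Γ Ω v)
    (hujet : JetInU g Γ Ω u) (hvjet : JetInU g Γ Ω v)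
    (hx : x ∈ Ω) (hξ : ξ ∈ Ω)
    (hgt : v x < u x) (hY : YMap Y u x = YMap Y v ξ) :
    ZMap Z u x < ZMap Z v ξ ∧
      (∀ z ∈ Ω, g z (YMap Y v ξ) (ZMap Z v ξ) < u z) ∧
      v ξ < u ξ := by
  have hgdiff := hg.differentiableOn (by norm_num)
  have hanti := strictAntiOn_section_of_gradZ_neg hΓ hgdiff fun x y z h => (hA2 x y z h).1
  obtain ⟨-, hux, hsupp_u⟩ :=
    hY ▸ hugc.isGSupport_YMap_ZMap hΩ hΓ.1 hgdiff hA1 hYZ hujet hx (hudiff x hx)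
  obtain ⟨-, hvξ, hsupp_v⟩ :=
    hvgc.isGSupport_YMap_ZMap hΩ hΓ.1 hgdiff hA1 hYZ hvjet hξ (hvdiff ξ hξ)
  have hZ : ZMap Z u x < ZMap Z v ξ := by
    refine ((hanti x (YMap Y v ξ)).lt_iff_gt (hsupp_v x hx).1 (hsupp_u x hx).1).mp ?_
    calc g x (YMap Y v ξ) (ZMap Z v ξ) ≤ v x := (hsupp_v x hx).2
      _ < u x := hgt
      _ = _ := hux
  have hbelow : ∀ z ∈ Ω, g z (YMap Y v ξ) (ZMap Z v ξ) < u z := fun z hz =>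
    (hanti z (YMap Y v ξ) (hsupp_u z hz).1 (hsupp_v z hz).1 hZ).trans_le (hsupp_u z hz).2
  exact ⟨hZ, hbelow, hvξ ▸ hbelow ξ hξ⟩

/-- If `u(x) > v(x)` and `Y_u(x) = Y_v(ξ)` then `Z_u(x) < Z_v(ξ)`, hence
`u(z) > g(z, Y_v(ξ), Z_v(ξ))` for all `z ∈ Ω`; in particular `u(ξ) > v(ξ)`. -/
theorem height_comparison_at_common_target
    {n : ℕ} {Ω : Set (Euc n)} {Γ : Set (Euc n × Euc n × ℝ)}
    {g : Euc n → Euc n → ℝ → ℝ} {Y : Euc n → ℝ → Euc n → Euc n} {Z : Euc n → ℝ → Euc n → ℝ}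
    {u v : Euc n → ℝ} {x ξ : Euc n}
    (hΩ : IsOpen Ω) (hΩconn : IsConnected Ω) (hΩbdd : Bornology.IsBounded Ω)
    (hΓ : GammaDomain Γ)
    (hg : ContDiffOn ℝ 4 (fun w : Euc n × Euc n × ℝ => g w.1 w.2.1 w.2.2) Γ)
    (hA1 : CondA1 g Γ) (hA1s : CondA1Star g Γ) (hA2 : CondA2 g Γ)
    (hYZ : YZCompat g Γ Y Z)
    (hudiff : ∀ x' ∈ Ω, DifferentiableAt ℝ u x') (hvdiff : ∀ x' ∈ Ω, DifferentiableAt ℝ v x')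
    (hugc : GConvexOn g Γ Ω u) (hvgc : GConvexOn g Γ Ω v)
    (hujet : JetInU g Γ Ω u) (hvjet : JetInU g Γ Ω v)
    (hx : x ∈ Ω) (hξ : ξ ∈ Ω)
    (hgt : v x < u x) (hY : YMap Y u x = YMap Y v ξ) :
    ZMap Z u x < ZMap Z v ξ ∧
      (∀ z ∈ Ω, g z (YMap Y v ξ) (ZMap Z v ξ) < u z) ∧
      v ξ < u ξ :=
  height_comparison_at_common_target_general hΩ hΓ hg hA1 hA2 hYZ hudiff hvdiff hugc hvgc hujet
    hvjet hx hξ hgt hY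
end

section
/- Assume u, v : Ω → ℝ are g-convex and differentiable, x₀ ∈ Ω, u(x₀) = v(x₀) and Du(x₀) ≠ Dv(x₀). Then every neighbourhood of x₀ contains a point z with u(z) < g(z, Y_v(x₀), Z_v(x₀)); that is, for every ε > 0 there exists z ∈ B_ε(x₀) ∩ Ω with u(z) < g(z, Y_v(x₀), Z_v(x₀)). -/
open Set MeasureTheory Metric NNReal

open Set MeasureTheory Metric

open Filter Topology

/-! If no such `z` existed, `g(·, Y_v(x₀), Z_v(x₀))` would lie below `u` near `x₀` and touch it
at `x₀` (both equal `v(x₀) = u(x₀)` there), so `u - g(·, Y_v(x₀), Z_v(x₀))` would have a local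
minimum at `x₀` and `Du(x₀) = g_x(x₀, Y_v(x₀), Z_v(x₀)) = Dv(x₀)`. -/

theorem IsLocalMin.fderiv_eq_of_sub {E : Type*} [NormedAddCommGroup E] [NormedSpace ℝ E]
    {f h : E → ℝ} {x : E} (hmin : IsLocalMin (fun x' => f x' - h x') x)
    (hf : DifferentiableAt ℝ f x) (hh : DifferentiableAt ℝ h x) :
    fderiv ℝ f x = fderiv ℝ h x := by
  have hzero := hmin.fderiv_eq_zero
  rw [fderiv_fun_sub hf hh] at hzero
  exact sub_eq_zero.mp hzero

theorem differentiableAt_section_of_contDiffOn {E F G : Type*} [NormedAddCommGroup E]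
    [NormedSpace ℝ E] [NormedAddCommGroup F] [NormedSpace ℝ F] [NormedAddCommGroup G]
    [NormedSpace ℝ G] {g : E → F → G → ℝ} {Γ : Set (E × F × G)} {k : WithTop ℕ∞} (hk : k ≠ 0)
    (hΓ : IsOpen Γ) (hg : ContDiffOn ℝ k (fun w : E × F × G => g w.1 w.2.1 w.2.2) Γ)
    {x : E} {y : F} {z : G} (hxyz : (x, y, z) ∈ Γ) :
    DifferentiableAt ℝ (fun x' => g x' y z) x := by
  have hG := (hg.differentiableOn hk).differentiableAt (hΓ.mem_nhds hxyz)
  have hslice : DifferentiableAt ℝ (fun x' : E => (x', y, z)) x :=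
    differentiableAt_id.prodMk (differentiableAt_const _)
  exact hG.comp x hslice

theorem gradient_eq_gradX_of_touching {n : ℕ} {g : Euc n → Euc n → ℝ → ℝ} {u : Euc n → ℝ}
    {x₀ y : Euc n} {z : ℝ} (hu : DifferentiableAt ℝ u x₀)
    (hg : DifferentiableAt ℝ (fun x => g x y z) x₀) (htouch : u x₀ = g x₀ y z)
    (hbelow : ∀ᶠ x in 𝓝 x₀, g x y z ≤ u x) :
    gradient u x₀ = gradX g x₀ y z := by
  have hmin : IsLocalMin (fun x => u x - g x y z) x₀ :=
    hbelow.mono fun x hx => by simpa [htouch] using hx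
  exact congrArg _ (hmin.fderiv_eq_of_sub hu hg)

theorem support_of_v_dips_below_u_general
    {n : ℕ} {Ω : Set (Euc n)} {Γ : Set (Euc n × Euc n × ℝ)}
    {g : Euc n → Euc n → ℝ → ℝ} {Y : Euc n → ℝ → Euc n → Euc n} {Z : Euc n → ℝ → Euc n → ℝ}
    {u v : Euc n → ℝ} {x₀ : Euc n}
    (hΩ : IsOpen Ω)
    (hΓ : GammaDomain Γ)
    (hg : ContDiffOn ℝ 4 (fun w : Euc n × Euc n × ℝ => g w.1 w.2.1 w.2.2) Γ)
    (hYZ : YZCompat g Γ Y Z)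
    (hudiff : ∀ x ∈ Ω, DifferentiableAt ℝ u x)
    (hvjet : JetInU g Γ Ω v)
    (hx₀ : x₀ ∈ Ω) (heq : u x₀ = v x₀) (hgrad : gradient u x₀ ≠ gradient v x₀) :
    ∀ ε > 0, ∃ z ∈ ball x₀ ε ∩ Ω, u z < g z (YMap Y v x₀) (ZMap Z v x₀) := by
  by_contra! hcon
  obtain ⟨ε, hε, hbelow⟩ := hcon
  obtain ⟨hΓmem, hgval, hgx⟩ := hYZ x₀ (v x₀) (gradient v x₀) (hvjet x₀ hx₀)
  have hnhds : ball x₀ ε ∩ Ω ∈ 𝓝 x₀ := inter_mem (ball_mem_nhds _ hε) (hΩ.mem_nhds hx₀)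
  have hDu : gradient u x₀ = gradX g x₀ (YMap Y v x₀) (ZMap Z v x₀) :=
    gradient_eq_gradX_of_touching (hudiff x₀ hx₀)
      (differentiableAt_section_of_contDiffOn (by norm_num) hΓ.1 hg hΓmem)
      (heq.trans hgval.symm) (eventually_of_mem hnhds hbelow)
  exact hgrad (hDu.trans hgx)

/-- If `u(x₀) = v(x₀)` but `Du(x₀) ≠ Dv(x₀)` then every neighbourhood of `x₀` contains a
point `z` with `u(z) < g(z, Y_v(x₀), Z_v(x₀))`. -/
theorem support_of_v_dips_below_u
    {n : ℕ} {Ω : Set (Euc n)} {Γ : Set (Euc n × Euc n × ℝ)}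
    {g : Euc n → Euc n → ℝ → ℝ} {Y : Euc n → ℝ → Euc n → Euc n} {Z : Euc n → ℝ → Euc n → ℝ}
    {u v : Euc n → ℝ} {x₀ : Euc n}
    (hΩ : IsOpen Ω) (hΩconn : IsConnected Ω) (hΩbdd : Bornology.IsBounded Ω)
    (hΓ : GammaDomain Γ)
    (hg : ContDiffOn ℝ 4 (fun w : Euc n × Euc n × ℝ => g w.1 w.2.1 w.2.2) Γ)
    (hA1 : CondA1 g Γ) (hA1s : CondA1Star g Γ) (hA2 : CondA2 g Γ)
    (hYZ : YZCompat g Γ Y Z)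
    (hudiff : ∀ x ∈ Ω, DifferentiableAt ℝ u x) (hvdiff : ∀ x ∈ Ω, DifferentiableAt ℝ v x)
    (hugc : GConvexOn g Γ Ω u) (hvgc : GConvexOn g Γ Ω v)
    (hujet : JetInU g Γ Ω u) (hvjet : JetInU g Γ Ω v)
    (hx₀ : x₀ ∈ Ω) (heq : u x₀ = v x₀) (hgrad : gradient u x₀ ≠ gradient v x₀) :
    ∀ ε > 0, ∃ z ∈ ball x₀ ε ∩ Ω, u z < g z (YMap Y v x₀) (ZMap Z v x₀) :=
  support_of_v_dips_below_u_general hΩ hΓ hg hYZ hudiff hvjet hx₀ heq hgrad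
end

section
/- Let Ω ⊂ ℝⁿ be open and let u, v ∈ C^{1,1}(Ω), i.e. continuously differentiable with locally Lipschitz gradients. If Du(x) = Dv(x) for every x in the coincidence set {x ∈ Ω : u(x) = v(x)}, then w := max{u, v} belongs to C^{1,1}(Ω); that is, w is continuously differentiable on Ω with locally Lipschitz gradient, and Dw = Du on {u ≥ v} and Dw = Dv on {v ≥ u}. -/
open Set MeasureTheory Metric NNReal

open Set MeasureTheory Metric

/-! At a point where `u > v` (or `v > u`) the maximum agrees with one of the two functions near
the point; at a coincidence point both have the same derivative, and since `max` is
`1`-Lipschitz for the sup norm, `max u v` inherits it. For the Lipschitz bound on a ball, two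
points on different sides of the coincidence set are joined by a segment which meets `{u = v}`
by the intermediate value theorem; there `Du = Dv`, so the two Lipschitz estimates chain
together along the segment. -/

open Filter Topology Asymptotics

section Max

variable {E : Type*} [NormedAddCommGroup E] [NormedSpace ℝ E] {f g : E → ℝ}
  {f' g' : E →L[ℝ] ℝ} {x : E}

theorem HasFDerivAt.max_of_common_fderiv (hf : HasFDerivAt f f' x) (hg : HasFDerivAt g f' x) :
    HasFDerivAt (fun y => max (f y) (g y)) f' x := by
  refine .of_isLittleO <| (isBigO_of_le _ fun y => ?_).trans_isLittleO
    (hf.isLittleO.norm_left.add hg.isLittleO.norm_left)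
  calc ‖max (f y) (g y) - max (f x) (g x) - f' (y - x)‖
      = |max (f y) (g y) - max (f x + f' (y - x)) (g x + f' (y - x))| := by
        rw [max_add_add_right, Real.norm_eq_abs, sub_sub]
    _ ≤ max |f y - (f x + f' (y - x))| |g y - (g x + f' (y - x))| :=
        abs_max_sub_max_le_max _ _ _ _
    _ ≤ ‖f y - f x - f' (y - x)‖ + ‖g y - g x - f' (y - x)‖ := by
        simp only [Real.norm_eq_abs, sub_sub]
        exact max_le_add_of_nonneg (abs_nonneg _) (abs_nonneg _)
    _ ≤ _ := Real.le_norm_self _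

theorem HasFDerivAt.max_of_ge (hf : HasFDerivAt f f' x) (hg : HasFDerivAt g g' x)
    (hle : g x ≤ f x) (hfg : f x = g x → f' = g') :
    HasFDerivAt (fun y => max (f y) (g y)) f' x := by
  rcases hle.lt_or_eq with hlt | heq
  · refine hf.congr_of_eventuallyEq ?_
    filter_upwards [hg.continuousAt.eventually_lt hf.continuousAt hlt] with y hy
    exact max_eq_left hy.le
  · exact hf.max_of_common_fderiv (hfg heq.symm ▸ hg)

end Max

theorem HasGradientAt.max_of_ge {F : Type*} [NormedAddCommGroup F] [InnerProductSpace ℝ F]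
    [CompleteSpace F] {f g : F → ℝ} {f' g' x : F} (hf : HasGradientAt f f' x)
    (hg : HasGradientAt g g' x) (hle : g x ≤ f x) (hfg : f x = g x → f' = g') :
    HasGradientAt (fun y => max (f y) (g y)) f' x :=
  HasFDerivAt.max_of_ge hf hg hle fun h => by rw [hfg h]

section Gluing

variable {E X : Type*} [NormedAddCommGroup E] [NormedSpace ℝ E] [PseudoMetricSpace X]
  {s : Set E} {h : E → ℝ} {φ f g : E → X} {K : ℝ≥0} {y z : E}

theorem Convex.exists_mem_segment_eq_zero (hs : Convex ℝ s) (hh : ContinuousOn h s)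
    (hy : y ∈ s) (hz : z ∈ s) (hy0 : 0 ≤ h y) (hz0 : h z ≤ 0) :
    ∃ m ∈ segment ℝ y z, h m = 0 :=
  (convex_segment y z).isPreconnected.intermediate_value (right_mem_segment ℝ y z)
    (left_mem_segment ℝ y z) (hh.mono (hs.segment_subset hy hz)) ⟨hz0, hy0⟩

theorem Convex.dist_le_mul_of_eq_on_zero (hs : Convex ℝ s) (hh : ContinuousOn h s)
    (hf : LipschitzOnWith K f s) (hg : LipschitzOnWith K g s)
    (hfg : ∀ m ∈ s, h m = 0 → f m = g m) (hy : y ∈ s) (hz : z ∈ s) (hy0 : 0 ≤ h y)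
    (hz0 : h z ≤ 0) : dist (f y) (g z) ≤ K * dist y z := by
  obtain ⟨m, hm, hm0⟩ := hs.exists_mem_segment_eq_zero hh hy hz hy0 hz0
  have hms : m ∈ s := hs.segment_subset hy hz hm
  calc dist (f y) (g z) ≤ dist (f y) (f m) + dist (g m) (g z) := by
        rw [hfg m hms hm0]; exact dist_triangle _ _ _
    _ ≤ K * dist y m + K * dist m z :=
        add_le_add (hf.dist_le_mul y hy m hms) (hg.dist_le_mul m hms z hz)
    _ = K * dist y z := by rw [← mul_add, dist_add_dist_of_mem_segment hm]

theorem Convex.lipschitzOnWith_of_eq_on_nonneg_of_eq_on_nonpos (hs : Convex ℝ s)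
    (hh : ContinuousOn h s) (hf : LipschitzOnWith K f s) (hg : LipschitzOnWith K g s)
    (hfg : ∀ m ∈ s, h m = 0 → f m = g m) (hφf : ∀ y ∈ s, 0 ≤ h y → φ y = f y)
    (hφg : ∀ y ∈ s, h y ≤ 0 → φ y = g y) : LipschitzOnWith K φ s := by
  refine LipschitzOnWith.of_dist_le_mul fun y hy z hz => ?_
  rcases le_total 0 (h y) with hy0 | hy0 <;> rcases le_total 0 (h z) with hz0 | hz0
  · rw [hφf y hy hy0, hφf z hz hz0]; exact hf.dist_le_mul y hy z hz
  · rw [hφf y hy hy0, hφg z hz hz0]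
    exact hs.dist_le_mul_of_eq_on_zero hh hf hg hfg hy hz hy0 hz0
  · rw [hφg y hy hy0, hφf z hz hz0, dist_comm, dist_comm y]
    exact hs.dist_le_mul_of_eq_on_zero hh hf hg hfg hz hy hz0 hy0
  · rw [hφg y hy hy0, hφg z hz hz0]; exact hg.dist_le_mul y hy z hz

end Gluing

section C11

variable {n : ℕ} {Ω : Set (Euc n)} {u : Euc n → ℝ} {x : Euc n}

theorem C11On.eventually_lipschitzOnWith_gradient_ball (hΩ : IsOpen Ω) (hu : C11On Ω u)
    (hx : x ∈ Ω) :
    ∀ᶠ ε in 𝓝[>] (0 : ℝ), ball x ε ⊆ Ω ∧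
      ∃ K, LipschitzOnWith K (gradient u) (ball x ε) := by
  obtain ⟨ε₀, hε₀, hΩ₀⟩ := isOpen_iff.1 hΩ x hx
  obtain ⟨ε, hε, K, hK⟩ := hu.2.2 x hx
  filter_upwards [Ioo_mem_nhdsGT (lt_min hε₀ hε)] with δ hδ
  have hδΩ : ball x δ ⊆ Ω := (ball_subset_ball (hδ.2.le.trans (min_le_left _ _))).trans hΩ₀
  have hδε : ball x δ ⊆ ball x ε := ball_subset_ball (hδ.2.le.trans (min_le_right _ _))
  exact ⟨hδΩ, K, hK.mono (subset_inter hδε hδΩ)⟩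

theorem c11On_of_lipschitzOnWith_gradient_ball (hd : ∀ x ∈ Ω, DifferentiableAt ℝ u x)
    (hL : ∀ x ∈ Ω, ∃ ε > 0, ball x ε ⊆ Ω ∧
      ∃ K, LipschitzOnWith K (gradient u) (ball x ε)) :
    C11On Ω u := by
  refine ⟨hd, fun x hx => ?_, fun x hx => ?_⟩ <;> obtain ⟨ε, hε, -, K, hK⟩ := hL x hx
  · exact (hK.continuousOn.continuousAt (ball_mem_nhds x hε)).continuousWithinAt
  · exact ⟨ε, hε, K, hK.mono inter_subset_left⟩

end C11

/-- If `u, v ∈ C^{1,1}(Ω)` have equal gradients on the coincidence set `{u = v}`,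
then `w = max{u,v} ∈ C^{1,1}(Ω)`, with `Dw = Du` on `{u ≥ v}` and `Dw = Dv` on `{v ≥ u}`. -/
theorem max_of_C11_is_C11
    {n : ℕ} {Ω : Set (Euc n)} {u v : Euc n → ℝ}
    (hΩ : IsOpen Ω)
    (hu11 : C11On Ω u) (hv11 : C11On Ω v)
    (hgrad : ∀ x ∈ Ω, u x = v x → gradient u x = gradient v x) :
    C11On Ω (fun x => max (u x) (v x)) ∧
      (∀ x ∈ Ω, v x ≤ u x → gradient (fun x' => max (u x') (v x')) x = gradient u x) ∧
      (∀ x ∈ Ω, u x ≤ v x → gradient (fun x' => max (u x') (v x')) x = gradient v x) := by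
  have hw_u : ∀ x ∈ Ω, v x ≤ u x →
      HasGradientAt (fun x' => max (u x') (v x')) (gradient u x) x := fun x hx h =>
    (hu11.1 x hx).hasGradientAt.max_of_ge (hv11.1 x hx).hasGradientAt h (hgrad x hx)
  have hw_v : ∀ x ∈ Ω, u x ≤ v x →
      HasGradientAt (fun x' => max (u x') (v x')) (gradient v x) x := fun x hx h => by
    simpa only [max_comm] using (hv11.1 x hx).hasGradientAt.max_of_ge
      (hu11.1 x hx).hasGradientAt h fun e => (hgrad x hx e.symm).symm
  refine ⟨c11On_of_lipschitzOnWith_gradient_ball (fun x hx => ?_) (fun x hx => ?_),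
    fun x hx h => (hw_u x hx h).gradient, fun x hx h => (hw_v x hx h).gradient⟩
  · rcases le_total (v x) (u x) with h | h
    exacts [(hw_u x hx h).differentiableAt, (hw_v x hx h).differentiableAt]
  · obtain ⟨ε, ⟨⟨hεΩ, K₁, hK₁⟩, -, K₂, hK₂⟩, hε⟩ :=
      (((hu11.eventually_lipschitzOnWith_gradient_ball hΩ hx).and
        (hv11.eventually_lipschitzOnWith_gradient_ball hΩ hx)).and self_mem_nhdsWithin).exists
    have hcont : ContinuousOn (fun y => u y - v y) (ball x ε) := fun y hy =>
      ((hu11.1 y (hεΩ hy)).continuousAt.sub (hv11.1 y (hεΩ hy)).continuousAt).continuousWithinAt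
    refine ⟨ε, hε, hεΩ, max K₁ K₂,
      (convex_ball x ε).lipschitzOnWith_of_eq_on_nonneg_of_eq_on_nonpos hcont
        (hK₁.weaken (le_max_left _ _)) (hK₂.weaken (le_max_right _ _))
        (fun y hy h0 => hgrad y (hεΩ hy) (sub_eq_zero.1 h0))
        (fun y hy h0 => (hw_u y (hεΩ hy) (sub_nonneg.1 h0)).gradient)
        (fun y hy h0 => (hw_v y (hεΩ hy) (sub_nonpos.1 h0)).gradient)⟩
end

section
/- Assume u, v : Ω → ℝ are g-convex. Then w := max{u, v} is g-convex. If moreover u, v ∈ C^{1,1}(Ω) and Du = Dv on {x ∈ Ω : u(x) = v(x)}, then w ∈ C^{1,1}(Ω). -/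
open Set MeasureTheory Metric NNReal

open Set MeasureTheory Metric

/-!
At each point the larger of `u`, `v` touches `max u v`, so its `g`-support is a `g`-support of
the maximum. Away from `{u = v}` the maximum locally coincides with `u` or `v`, while on `{u = v}`
both have the same derivative, so `max u v` is differentiable with gradient `∇u` or `∇v` at every
point, and this gradient is continuous. For the Lipschitz bound between a point where `u ≥ v` and
one where `u ≤ v`, pass through a point of `{u = v}` on the segment joining them, where the two
gradients agree.
-/

open Filter Topology

lemma IsGSupport.of_le {n : ℕ} {g : Euc n → Euc n → ℝ → ℝ} {Γ : Set (Euc n × Euc n × ℝ)}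
    {Ω : Set (Euc n)} {u w : Euc n → ℝ} {x₀ y₀ : Euc n} {z₀ : ℝ}
    (h : IsGSupport g Γ Ω u x₀ y₀ z₀) (hle : ∀ x ∈ Ω, u x ≤ w x) (heq : w x₀ = u x₀) :
    IsGSupport g Γ Ω w x₀ y₀ z₀ :=
  ⟨h.1, heq.trans h.2.1, fun x hx => ⟨(h.2.2 x hx).1, (h.2.2 x hx).2.trans (hle x hx)⟩⟩

lemma GConvexOn.sup {n : ℕ} {g : Euc n → Euc n → ℝ → ℝ} {Γ : Set (Euc n × Euc n × ℝ)}
    {Ω : Set (Euc n)} {u v : Euc n → ℝ} (hu : GConvexOn g Γ Ω u) (hv : GConvexOn g Γ Ω v) :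
    GConvexOn g Γ Ω (fun x => max (u x) (v x)) := by
  intro x₀ hx₀
  rcases le_total (v x₀) (u x₀) with h | h
  · obtain ⟨y₀, z₀, hs⟩ := hu x₀ hx₀
    exact ⟨y₀, z₀, hs.of_le (fun x _ => le_max_left _ _) (max_eq_left h)⟩
  · obtain ⟨y₀, z₀, hs⟩ := hv x₀ hx₀
    exact ⟨y₀, z₀, hs.of_le (fun x _ => le_max_right _ _) (max_eq_right h)⟩

lemma hasFDerivAt_max {E : Type*} [NormedAddCommGroup E] [NormedSpace ℝ E]
    {u v : E → ℝ} {f : E →L[ℝ] ℝ} {x : E} (hu : HasFDerivAt u f x) (hv : HasFDerivAt v f x) :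
    HasFDerivAt (fun y => max (u y) (v y)) f x := by
  refine .of_isLittleO <| (Asymptotics.isBigO_of_le _ fun y => ?_).trans_isLittleO
    (hu.isLittleO.norm_left.add hv.isLittleO.norm_left)
  rw [Real.norm_of_nonneg (add_nonneg (norm_nonneg _) (norm_nonneg _))]
  simp only [Real.norm_eq_abs, sub_sub]
  calc |max (u y) (v y) - (max (u x) (v x) + f (y - x))|
      = |max (u y) (v y) - max (u x + f (y - x)) (v x + f (y - x))| := by
        rw [max_add_add_right]
    _ ≤ max |u y - (u x + f (y - x))| |v y - (v x + f (y - x))| := abs_max_sub_max_le_max ..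
    _ ≤ |u y - (u x + f (y - x))| + |v y - (v x + f (y - x))| :=
        max_le_add_of_nonneg (abs_nonneg _) (abs_nonneg _)

lemma ContinuousWithinAt.of_eventually_eq_or_eq {α β : Type*} [TopologicalSpace α]
    [TopologicalSpace β] {f g F : α → β} {s : Set α} {x : α} (hf : ContinuousWithinAt f s x)
    (hg : ContinuousWithinAt g s x) (hfx : f x = F x) (hgx : g x = F x)
    (hF : ∀ᶠ y in 𝓝[s] x, F y = f y ∨ F y = g y) : ContinuousWithinAt F s x := by
  intro U hU
  change ∀ᶠ y in 𝓝[s] x, F y ∈ U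
  filter_upwards [hf (hfx ▸ hU), hg (hgx ▸ hU), hF] with y hfy hgy hy
  rcases hy with h | h <;> simpa [h]

section GradientMax

variable {E : Type*} [NormedAddCommGroup E] [InnerProductSpace ℝ E] [CompleteSpace E]
  {u v : E → ℝ} {x : E}

lemma hasGradientAt_max_of_le (hu : DifferentiableAt ℝ u x) (hv : DifferentiableAt ℝ v x)
    (heq : u x = v x → gradient u x = gradient v x) (hle : v x ≤ u x) :
    HasGradientAt (fun y => max (u y) (v y)) (gradient u x) x := by
  rcases hle.lt_or_eq with hlt | hvu
  · refine hu.hasGradientAt.congr_of_eventuallyEq ?_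
    filter_upwards [hv.continuousAt.eventually_lt hu.continuousAt hlt] with y hy
    exact max_eq_left hy.le
  · have hv' : HasGradientAt v (gradient u x) x := heq hvu.symm ▸ hv.hasGradientAt
    rw [hasGradientAt_iff_hasFDerivAt] at hv' ⊢
    exact hasFDerivAt_max hu.hasGradientAt.hasFDerivAt hv'

lemma hasGradientAt_max_of_ge (hu : DifferentiableAt ℝ u x) (hv : DifferentiableAt ℝ v x)
    (heq : u x = v x → gradient u x = gradient v x) (hle : u x ≤ v x) :
    HasGradientAt (fun y => max (u y) (v y)) (gradient v x) x := by
  simpa only [max_comm (v _)] using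
    hasGradientAt_max_of_le hv hu (fun h => (heq h.symm).symm) hle

lemma gradient_max_eq_or (hu : DifferentiableAt ℝ u x) (hv : DifferentiableAt ℝ v x)
    (heq : u x = v x → gradient u x = gradient v x) :
    gradient (fun y => max (u y) (v y)) x = gradient u x ∨
      gradient (fun y => max (u y) (v y)) x = gradient v x := by
  rcases le_total (v x) (u x) with h | h
  exacts [.inl (hasGradientAt_max_of_le hu hv heq h).gradient,
    .inr (hasGradientAt_max_of_ge hu hv heq h).gradient]

lemma continuousWithinAt_gradient_max {s : Set E} (hx : x ∈ s)
    (hu : ∀ y ∈ s, DifferentiableAt ℝ u y) (hv : ∀ y ∈ s, DifferentiableAt ℝ v y)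
    (heq : ∀ y ∈ s, u y = v y → gradient u y = gradient v y)
    (hcu : ContinuousWithinAt (gradient u) s x) (hcv : ContinuousWithinAt (gradient v) s x) :
    ContinuousWithinAt (gradient fun y => max (u y) (v y)) s x := by
  rcases lt_trichotomy (u x) (v x) with hlt | hxe | hlt
  · refine hcv.congr_of_eventuallyEq ?_
      (hasGradientAt_max_of_ge (hu x hx) (hv x hx) (heq x hx) hlt.le).gradient
    filter_upwards [nhdsWithin_le_nhds <| (hu x hx).continuousAt.eventually_lt
      (hv x hx).continuousAt hlt, self_mem_nhdsWithin] with y hy hys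
    exact (hasGradientAt_max_of_ge (hu y hys) (hv y hys) (heq y hys) hy.le).gradient
  · refine hcu.of_eventually_eq_or_eq hcv
      (hasGradientAt_max_of_le (hu x hx) (hv x hx) (heq x hx) hxe.ge).gradient.symm
      (hasGradientAt_max_of_ge (hu x hx) (hv x hx) (heq x hx) hxe.le).gradient.symm ?_
    filter_upwards [self_mem_nhdsWithin] with y hys
    exact gradient_max_eq_or (hu y hys) (hv y hys) (heq y hys)
  · refine hcu.congr_of_eventuallyEq ?_
      (hasGradientAt_max_of_le (hu x hx) (hv x hx) (heq x hx) hlt.le).gradient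
    filter_upwards [nhdsWithin_le_nhds <| (hv x hx).continuousAt.eventually_lt
      (hu x hx).continuousAt hlt, self_mem_nhdsWithin] with y hy hys
    exact (hasGradientAt_max_of_le (hu y hys) (hv y hys) (heq y hys) hy.le).gradient

end GradientMax

lemma Convex.lipschitzOnWith_of_sign_split {E F : Type*} [NormedAddCommGroup E] [NormedSpace ℝ E]
    [PseudoMetricSpace F] {s : Set E} (hs : Convex ℝ s) {φ : E → ℝ} (hφ : ContinuousOn φ s)
    {f g h : E → F} {K₁ K₂ : ℝ≥0} (hf : LipschitzOnWith K₁ f s) (hg : LipschitzOnWith K₂ g s)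
    (hfg : ∀ x ∈ s, φ x = 0 → f x = g x) (hnonneg : ∀ x ∈ s, 0 ≤ φ x → h x = f x)
    (hnonpos : ∀ x ∈ s, φ x ≤ 0 → h x = g x) : LipschitzOnWith (max K₁ K₂) h s := by
  rw [lipschitzOnWith_iff_dist_le_mul] at hf hg ⊢
  have hK₁ : (K₁ : ℝ) ≤ (max K₁ K₂ : ℝ≥0) := by exact_mod_cast le_max_left K₁ K₂
  have hK₂ : (K₂ : ℝ) ≤ (max K₁ K₂ : ℝ≥0) := by exact_mod_cast le_max_right K₁ K₂
  have cross : ∀ a ∈ s, ∀ b ∈ s, 0 ≤ φ a → φ b ≤ 0 →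
      dist (h a) (h b) ≤ (max K₁ K₂ : ℝ≥0) * dist a b := by
    intro a ha b hb hφa hφb
    have hseg : segment ℝ a b ⊆ s := hs.segment_subset ha hb
    obtain ⟨c, hc, hφc⟩ := (convex_segment a b).isPreconnected.intermediate_value
      (right_mem_segment ℝ a b) (left_mem_segment ℝ a b) (hφ.mono hseg) ⟨hφb, hφa⟩
    calc dist (h a) (h b) = dist (f a) (g b) := by rw [hnonneg a ha hφa, hnonpos b hb hφb]
      _ ≤ dist (f a) (f c) + dist (g c) (g b) := by
        rw [hfg c (hseg hc) hφc]; exact dist_triangle _ _ _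
      _ ≤ K₁ * dist a c + K₂ * dist c b :=
        add_le_add (hf a ha c (hseg hc)) (hg c (hseg hc) b hb)
      _ ≤ (max K₁ K₂ : ℝ≥0) * dist a c + (max K₁ K₂ : ℝ≥0) * dist c b := by gcongr
      _ = (max K₁ K₂ : ℝ≥0) * dist a b := by rw [← mul_add, dist_add_dist_of_mem_segment hc]
  intro a ha b hb
  rcases le_total 0 (φ a) with hφa | hφa <;> rcases le_total 0 (φ b) with hφb | hφb
  · rw [hnonneg a ha hφa, hnonneg b hb hφb]
    exact (hf a ha b hb).trans (by gcongr)
  · exact cross a ha b hb hφa hφb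
  · rw [dist_comm, dist_comm a]
    exact cross b hb a ha hφb hφa
  · rw [hnonpos a ha hφa, hnonpos b hb hφb]
    exact (hg a ha b hb).trans (by gcongr)

lemma C11On.sup {n : ℕ} {Ω : Set (Euc n)} {u v : Euc n → ℝ} (hΩ : IsOpen Ω)
    (hu : C11On Ω u) (hv : C11On Ω v) (heq : ∀ x ∈ Ω, u x = v x → gradient u x = gradient v x) :
    C11On Ω (fun x => max (u x) (v x)) := by
  obtain ⟨hdu, hcu, hlu⟩ := hu
  obtain ⟨hdv, hcv, hlv⟩ := hv
  have hgu : ∀ x ∈ Ω, v x ≤ u x → HasGradientAt (fun y => max (u y) (v y)) (gradient u x) x :=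
    fun x hx => hasGradientAt_max_of_le (hdu x hx) (hdv x hx) (heq x hx)
  have hgv : ∀ x ∈ Ω, u x ≤ v x → HasGradientAt (fun y => max (u y) (v y)) (gradient v x) x :=
    fun x hx => hasGradientAt_max_of_ge (hdu x hx) (hdv x hx) (heq x hx)
  refine ⟨fun x hx => ?_, fun x hx => continuousWithinAt_gradient_max hx hdu hdv heq
    (hcu x hx) (hcv x hx), fun x hx => ?_⟩
  · rcases le_total (v x) (u x) with h | h
    exacts [(hgu x hx h).differentiableAt, (hgv x hx h).differentiableAt]
  obtain ⟨ε₁, hε₁, K₁, hK₁⟩ := hlu x hx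
  obtain ⟨ε₂, hε₂, K₂, hK₂⟩ := hlv x hx
  obtain ⟨ε₃, hε₃, hball⟩ := Metric.isOpen_iff.mp hΩ x hx
  set ε := min ε₁ (min ε₂ ε₃)
  have hΩε : ball x ε ⊆ Ω := (ball_subset_ball (by simp [ε])).trans hball
  have hsub : ∀ {δ}, ε ≤ δ → ball x ε ⊆ ball x δ ∩ Ω := fun h =>
    subset_inter (ball_subset_ball h) hΩε
  refine ⟨ε, by positivity, max K₁ K₂, LipschitzOnWith.mono ?_ inter_subset_left⟩
  refine (convex_ball x ε).lipschitzOnWith_of_sign_split (φ := fun y => u y - v y)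
    (fun y hy => ((hdu y (hΩε hy)).continuousAt.sub (hdv y (hΩε hy)).continuousAt)
      |>.continuousWithinAt)
    (hK₁.mono (hsub (by simp [ε]))) (hK₂.mono (hsub (by simp [ε])))
    (fun y hy h => heq y (hΩε hy) (sub_eq_zero.1 h))
    (fun y hy h => (hgu y (hΩε hy) (sub_nonneg.1 h)).gradient)
    (fun y hy h => (hgv y (hΩε hy) (sub_nonpos.1 h)).gradient)

theorem max_gconvex_and_C11_general
    {n : ℕ} {Ω : Set (Euc n)} {Γ : Set (Euc n × Euc n × ℝ)}
    {g : Euc n → Euc n → ℝ → ℝ} {u v : Euc n → ℝ}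
    (hΩ : IsOpen Ω)
    (hugc : GConvexOn g Γ Ω u) (hvgc : GConvexOn g Γ Ω v) :
    GConvexOn g Γ Ω (fun x => max (u x) (v x)) ∧
      (C11On Ω u → C11On Ω v →
        (∀ x ∈ Ω, u x = v x → gradient u x = gradient v x) →
        C11On Ω (fun x => max (u x) (v x))) :=
  ⟨hugc.sup hvgc, C11On.sup hΩ⟩

/-- The maximum of two `g`-convex functions is `g`-convex; if moreover `u, v ∈ C^{1,1}(Ω)`
with `Du = Dv` on `{u = v}` then the maximum is `C^{1,1}(Ω)`. -/
theorem max_gconvex_and_C11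
    {n : ℕ} {Ω : Set (Euc n)} {Γ : Set (Euc n × Euc n × ℝ)}
    {g : Euc n → Euc n → ℝ → ℝ} {u v : Euc n → ℝ}
    (hΩ : IsOpen Ω) (hΩconn : IsConnected Ω) (hΩbdd : Bornology.IsBounded Ω)
    (hΓ : GammaDomain Γ)
    (hg : ContDiffOn ℝ 4 (fun w : Euc n × Euc n × ℝ => g w.1 w.2.1 w.2.2) Γ)
    (hA1 : CondA1 g Γ) (hA1s : CondA1Star g Γ) (hA2 : CondA2 g Γ)
    (hugc : GConvexOn g Γ Ω u) (hvgc : GConvexOn g Γ Ω v) :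
    GConvexOn g Γ Ω (fun x => max (u x) (v x)) ∧
      (C11On Ω u → C11On Ω v →
        (∀ x ∈ Ω, u x = v x → gradient u x = gradient v x) →
        C11On Ω (fun x => max (u x) (v x))) :=
  max_gconvex_and_C11_general hΩ hugc hvgc
end
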